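/- (Uniqueness of measures on a generated abstract σ-algebra.) Let Σ be an abstract σ-algebra and B₀ ⊆ Σ a Boolean subalgebra (⊥, ⊤ ∈ B₀ and B₀ is closed under ⊓, ⊔ and complements) which generates Σ: the only subset of Σ containing B₀, closed under complements, and containing a least upper bound of each of its ℕ-indexed families, is Σ itself. If μ₁ and μ₂ are measures on Σ with μ₁ ⊤ ≤ 1 and μ₁ a = μ₂ a for all a ∈ B₀, then μ₁ = μ₂. -/

import Mathlib

/-!
The elements on which two finite measures with the same total mass agree form a Dynkin
system. The Dynkin system generated by an `⊓`-closed family is again `⊓`-closed, and an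
`⊓`-closed Dynkin system is closed under least upper bounds of arbitrary sequences, since these
can be disjointified. Hence the Dynkin system generated by `B₀` is all of `A`.
-/

open scoped ENNReal
open Set Function

lemma IsLUB.range_inf_const {α ι : Type*} [GeneralizedHeytingAlgebra α] {a : ι → α} {s : α}
    (hs : IsLUB (range a) s) (y : α) : IsLUB (range fun i => a i ⊓ y) (s ⊓ y) := by
  refine ⟨forall_mem_range.2 fun i => inf_le_inf_right y (hs.1 (mem_range_self i)), fun u hu => ?_⟩
  rw [← le_himp_iff]
  exact hs.2 (forall_mem_range.2 fun i => le_himp_iff.2 (hu (mem_range_self i)))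

lemma isLUB_range_disjointed_iff {α : Type*} [GeneralizedBooleanAlgebra α] {a : ℕ → α} {s : α} :
    IsLUB (range (disjointed a)) s ↔ IsLUB (range a) s := by
  simp only [IsLUB, ← upperBounds_range_partialSups (disjointed a), partialSups_disjointed,
    upperBounds_range_partialSups]

section BooleanAlgebra

variable {A : Type*} [BooleanAlgebra A]

/-- Countable additivity along this sequence gives finite additivity. -/
def pairSeq (x y : A) : ℕ → A
  | 0 => x
  | 1 => y
  | _ + 2 => ⊥

lemma isLUB_range_pairSeq (x y : A) : IsLUB (range (pairSeq x y)) (x ⊔ y) := by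
  refine ⟨forall_mem_range.2 fun n => ?_, fun u hu => sup_le (hu ⟨0, rfl⟩) (hu ⟨1, rfl⟩)⟩
  match n with
  | 0 => exact le_sup_left
  | 1 => exact le_sup_right
  | _ + 2 => exact bot_le

lemma pairwise_disjoint_pairSeq {x y : A} (h : Disjoint x y) :
    Pairwise (Disjoint on pairSeq x y) := by
  rintro (_ | _ | i) (_ | _ | j) hij <;> simp_all [Function.onFun, pairSeq, h.symm]

lemma tsum_pairSeq {M : Type*} [AddCommMonoid M] [TopologicalSpace M] (μ : A → M) (h0 : μ ⊥ = 0)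
    (x y : A) : ∑' n, μ (pairSeq x y n) = μ x + μ y := by
  rw [tsum_eq_sum (s := Finset.range 2) fun n hn => ?_]
  · simp [Finset.sum_range_succ, pairSeq]
  · obtain ⟨k, rfl⟩ : ∃ k, n = k + 2 := ⟨n - 2, by simp at hn; omega⟩
    exact h0

/-- A Dynkin system, phrased with `IsLUB` since countable sups need not exist in `A`. -/
structure IsDynkinSystem (S : Set A) : Prop where
  bot_mem : ⊥ ∈ S
  compl_mem : ∀ x ∈ S, xᶜ ∈ S
  isLUB_mem : ∀ a : ℕ → A, Pairwise (Disjoint on a) → (∀ n, a n ∈ S) →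
    ∀ s, IsLUB (range a) s → s ∈ S

namespace IsDynkinSystem

variable {S : Set A}

lemma sup_mem (hS : IsDynkinSystem S) {x y : A} (hx : x ∈ S) (hy : y ∈ S) (h : Disjoint x y) :
    x ⊔ y ∈ S := by
  refine hS.isLUB_mem _ (pairwise_disjoint_pairSeq h) (fun n => ?_) _ (isLUB_range_pairSeq x y)
  match n with
  | 0 => exact hx
  | 1 => exact hy
  | _ + 2 => exact hS.bot_mem

lemma setOf_inf_mem (hS : IsDynkinSystem S) {y : A} (hy : y ∈ S) :
    IsDynkinSystem {x | x ⊓ y ∈ S} where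
  bot_mem := by simpa using hS.bot_mem
  compl_mem x hx := by
    have hcompl : (yᶜ ⊔ x ⊓ y)ᶜ = xᶜ ⊓ y := by
      rw [compl_sup, compl_compl, compl_inf, inf_sup_left, inf_comm y xᶜ, inf_compl_self,
        sup_bot_eq]
    rw [mem_ofPred_eq, ← hcompl]
    exact hS.compl_mem _
      (hS.sup_mem (hS.compl_mem y hy) hx (disjoint_compl_left.mono_right inf_le_right))
  isLUB_mem a ha haS s hs :=
    hS.isLUB_mem _ (fun _ _ hij => (ha hij).mono inf_le_left inf_le_left) haS _
      (hs.range_inf_const y)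

lemma isLUB_mem_of_inf_mem (hS : IsDynkinSystem S) (hinf : ∀ x ∈ S, ∀ y ∈ S, x ⊓ y ∈ S)
    {a : ℕ → A} (ha : ∀ n, a n ∈ S) {s : A} (hs : IsLUB (range a) s) : s ∈ S :=
  hS.isLUB_mem _ (disjoint_disjointed a)
    (fun n => disjointedRec (fun t i ht => _root_.sdiff_eq (x := t) ▸
      hinf _ ht _ (hS.compl_mem _ (ha i))) (ha n))
    s (isLUB_range_disjointed_iff.2 hs)

end IsDynkinSystem

def dynkinClosure (B : Set A) : Set A :=
  {x | ∀ S, B ⊆ S → IsDynkinSystem S → x ∈ S}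

variable {B : Set A}

lemma subset_dynkinClosure : B ⊆ dynkinClosure B :=
  fun _ hx _ hB _ => hB hx

lemma dynkinClosure_subset {S : Set A} (hS : IsDynkinSystem S) (hB : B ⊆ S) :
    dynkinClosure B ⊆ S :=
  fun _ hx => hx S hB hS

lemma isDynkinSystem_dynkinClosure (B : Set A) : IsDynkinSystem (dynkinClosure B) where
  bot_mem _ _ hS := hS.bot_mem
  compl_mem _ hx S hB hS := hS.compl_mem _ (hx S hB hS)
  isLUB_mem a ha haS s hs S hB hS := hS.isLUB_mem a ha (fun n => haS n S hB hS) s hs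

/-- Dynkin's π-λ lemma. -/
lemma inf_mem_dynkinClosure (hB : ∀ x ∈ B, ∀ y ∈ B, x ⊓ y ∈ B) {x y : A}
    (hx : x ∈ dynkinClosure B) (hy : y ∈ dynkinClosure B) : x ⊓ y ∈ dynkinClosure B := by
  have hD := isDynkinSystem_dynkinClosure B
  have inf_gen : ∀ b ∈ B, ∀ z ∈ dynkinClosure B, z ⊓ b ∈ dynkinClosure B := fun b hb =>
    dynkinClosure_subset (hD.setOf_inf_mem (subset_dynkinClosure hb))
      fun z hz => subset_dynkinClosure (hB z hz b hb)
  refine dynkinClosure_subset (hD.setOf_inf_mem hy) (fun b hb => ?_) hx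
  rw [mem_ofPred_eq, inf_comm]
  exact inf_gen b hb y hy

lemma isLUB_mem_dynkinClosure (hB : ∀ x ∈ B, ∀ y ∈ B, x ⊓ y ∈ B) {a : ℕ → A}
    (ha : ∀ n, a n ∈ dynkinClosure B) {s : A} (hs : IsLUB (range a) s) : s ∈ dynkinClosure B :=
  (isDynkinSystem_dynkinClosure B).isLUB_mem_of_inf_mem
    (fun _ hx _ hy => inf_mem_dynkinClosure hB hx hy) ha hs

def IsCountablyAdditive (μ : A → ℝ≥0∞) : Prop :=
  ∀ a : ℕ → A, Pairwise (Disjoint on a) → ∀ s, IsLUB (range a) s → μ s = ∑' n, μ (a n)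

namespace IsCountablyAdditive

variable {μ : A → ℝ≥0∞}

lemma map_sup (hμ : IsCountablyAdditive μ) (h0 : μ ⊥ = 0) {x y : A} (h : Disjoint x y) :
    μ (x ⊔ y) = μ x + μ y := by
  rw [hμ _ (pairwise_disjoint_pairSeq h) _ (isLUB_range_pairSeq x y), tsum_pairSeq μ h0]

lemma map_compl (hμ : IsCountablyAdditive μ) (h0 : μ ⊥ = 0) (htop : μ ⊤ ≠ ∞) (x : A) :
    μ xᶜ = μ ⊤ - μ x := by
  have hadd : μ x + μ xᶜ = μ ⊤ := by
    rw [← hμ.map_sup h0 disjoint_compl_right, sup_compl_eq_top]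
  refine ENNReal.eq_sub_of_add_eq (ne_top_of_le_ne_top htop ?_) (add_comm (μ x) _ ▸ hadd)
  exact hadd ▸ le_self_add

end IsCountablyAdditive

lemma isDynkinSystem_setOf_eq {μ₁ μ₂ : A → ℝ≥0∞} (h₁ : IsCountablyAdditive μ₁)
    (h₂ : IsCountablyAdditive μ₂) (h₁0 : μ₁ ⊥ = 0) (h₂0 : μ₂ ⊥ = 0) (htop : μ₁ ⊤ = μ₂ ⊤)
    (hfin : μ₁ ⊤ ≠ ∞) : IsDynkinSystem {x | μ₁ x = μ₂ x} where
  bot_mem := h₁0.trans h₂0.symm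
  compl_mem x hx := by
    rw [mem_ofPred_eq, h₁.map_compl h₁0 hfin, h₂.map_compl h₂0 (htop ▸ hfin), htop, hx]
  isLUB_mem a ha haS s hs := by
    rw [mem_ofPred_eq, h₁ a ha s hs, h₂ a ha s hs]
    exact tsum_congr haS

end BooleanAlgebra

theorem measure_unique_of_generating_general {A : Type*} [BooleanAlgebra A]
    (B₀ : Set A)
    (htop : ⊤ ∈ B₀)
    (hinf : ∀ a ∈ B₀, ∀ b ∈ B₀, a ⊓ b ∈ B₀)
    (hgen : ∀ S : Set A, B₀ ⊆ S → (∀ x ∈ S, xᶜ ∈ S) →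
      (∀ a : ℕ → A, (∀ n, a n ∈ S) → ∀ s : A, IsLUB (Set.range a) s → s ∈ S) →
      S = Set.univ)
    (μ₁ μ₂ : A → ℝ≥0∞)
    (h₁0 : μ₁ ⊥ = 0)
    (h₁ : ∀ a : ℕ → A, (∀ i j, i ≠ j → a i ⊓ a j = ⊥) →
      ∀ s, IsLUB (Set.range a) s → μ₁ s = ∑' n, μ₁ (a n))
    (h₂0 : μ₂ ⊥ = 0)
    (h₂ : ∀ a : ℕ → A, (∀ i j, i ≠ j → a i ⊓ a j = ⊥) →
      ∀ s, IsLUB (Set.range a) s → μ₂ s = ∑' n, μ₂ (a n))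
    (htop1 : μ₁ ⊤ ≤ 1)
    (heq : ∀ a ∈ B₀, μ₁ a = μ₂ a) :
    μ₁ = μ₂ := by
  have hadd₁ : IsCountablyAdditive μ₁ := fun a ha => h₁ a fun _ _ hij => (ha hij).eq_bot
  have hadd₂ : IsCountablyAdditive μ₂ := fun a ha => h₂ a fun _ _ hij => (ha hij).eq_bot
  have hagree : IsDynkinSystem {x | μ₁ x = μ₂ x} :=
    isDynkinSystem_setOf_eq hadd₁ hadd₂ h₁0 h₂0 (heq ⊤ htop)
      (ne_top_of_le_ne_top ENNReal.one_ne_top htop1)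
  have hclosure : dynkinClosure B₀ = univ :=
    hgen _ subset_dynkinClosure (isDynkinSystem_dynkinClosure B₀).compl_mem
      fun _ ha _ hs => isLUB_mem_dynkinClosure hinf ha hs
  funext x
  exact dynkinClosure_subset hagree heq (hclosure ▸ mem_univ x)

/-- Uniqueness of measures on a generated abstract σ-algebra: a measure with
total mass at most `1` is determined by its values on a generating Boolean
subalgebra. -/
theorem measure_unique_of_generating {A : Type*} [BooleanAlgebra A]
    (hA : ∀ a : ℕ → A, ∃ s, IsLUB (Set.range a) s)
    (B₀ : Set A)
    (hbot : ⊥ ∈ B₀) (htop : ⊤ ∈ B₀)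
    (hinf : ∀ a ∈ B₀, ∀ b ∈ B₀, a ⊓ b ∈ B₀)
    (hsup : ∀ a ∈ B₀, ∀ b ∈ B₀, a ⊔ b ∈ B₀)
    (hcompl : ∀ a ∈ B₀, aᶜ ∈ B₀)
    (hgen : ∀ S : Set A, B₀ ⊆ S → (∀ x ∈ S, xᶜ ∈ S) →
      (∀ a : ℕ → A, (∀ n, a n ∈ S) → ∀ s : A, IsLUB (Set.range a) s → s ∈ S) →
      S = Set.univ)
    (μ₁ μ₂ : A → ℝ≥0∞)
    (h₁0 : μ₁ ⊥ = 0)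
    (h₁ : ∀ a : ℕ → A, (∀ i j, i ≠ j → a i ⊓ a j = ⊥) →
      ∀ s, IsLUB (Set.range a) s → μ₁ s = ∑' n, μ₁ (a n))
    (h₂0 : μ₂ ⊥ = 0)
    (h₂ : ∀ a : ℕ → A, (∀ i j, i ≠ j → a i ⊓ a j = ⊥) →
      ∀ s, IsLUB (Set.range a) s → μ₂ s = ∑' n, μ₂ (a n))
    (htop1 : μ₁ ⊤ ≤ 1)
    (heq : ∀ a ∈ B₀, μ₁ a = μ₂ a) :
    μ₁ = μ₂ :=
  measure_unique_of_generating_general B₀ htop hinf hgen μ₁ μ₂ h₁0 h₁ h₂0 h₂ htop1 heq
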